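/- Let H : ℝ^{2m} → ℝ be continuously differentiable, let y₀, y₁ ∈ ℝ^{2m}, let c₁,…,c_k ∈ [0,1] and b₁,…,b_k ∈ ℝ, and suppose y₁ = y₀ + h·∑ᵢ bᵢ·J∇H((1-cᵢ)y₀ + cᵢy₁). If the quadrature formula with nodes cᵢ and weights bᵢ exactly integrates the function c ↦ (y₁-y₀)ᵀ∇H((1-c)y₀ + c y₁) on [0,1], then H(y₁) = H(y₀). -/

import Mathlib

/-!
Along the segment `γ(t) = (1 - t) y₀ + t y₁` the fundamental theorem of calculus gives
`H y₁ - H y₀ = ∫₀¹ ⟪y₁ - y₀, ∇H(γ t)⟫ dt`, which by exactness of the quadrature equals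
`⟪y₁ - y₀, G⟫` with `G = ∑ bᵢ ∇H(γ cᵢ)`. The method says `y₁ - y₀ = h J G`, and
`⟪J G, G⟫ = 0` because `J` is skew-adjoint.
-/

open RealInnerProductSpace
open scoped Gradient

section InnerProductSpace

variable {E : Type*} [NormedAddCommGroup E] [InnerProductSpace ℝ E]

theorem inner_apply_self_eq_zero_of_skew {J : E →ₗ[ℝ] E}
    (hJ : ∀ v w : E, ⟪J v, w⟫ = -⟪v, J w⟫) (v : E) : ⟪J v, v⟫ = 0 := by
  linarith [hJ v v, real_inner_comm v (J v)]

theorem sum_mul_inner_eq_zero_of_skew {ι : Type*} [Fintype ι] {J : E →ₗ[ℝ] E}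
    (hJ : ∀ v w : E, ⟪J v, w⟫ = -⟪v, J w⟫) (h : ℝ) (b : ι → ℝ) (g : ι → E) :
    ∑ i, b i * ⟪h • ∑ j, b j • J (g j), g i⟫ = 0 := by
  simp_rw [← map_smul, ← map_sum, ← real_inner_smul_right, ← inner_sum,
    real_inner_smul_left, inner_apply_self_eq_zero_of_skew hJ, mul_zero]

variable [CompleteSpace E]

theorem ContDiff.continuous_gradient {H : E → ℝ} (hH : ContDiff ℝ 1 H) :
    Continuous (∇ H) :=
  (InnerProductSpace.toDual ℝ E).symm.continuous.comp (hH.continuous_fderiv one_ne_zero)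

theorem hasDerivAt_comp_segment {H : E → ℝ} (hH : Differentiable ℝ H) (y₀ y₁ : E) (t : ℝ) :
    HasDerivAt (fun s : ℝ => H ((1 - s) • y₀ + s • y₁))
      ⟪y₁ - y₀, ∇ H ((1 - t) • y₀ + t • y₁)⟫ t := by
  have hγ : HasDerivAt (fun s : ℝ => (1 - s) • y₀ + s • y₁) (y₁ - y₀) t := by
    have hline : HasDerivAt (AffineMap.lineMap y₀ y₁) (y₁ - y₀) t := AffineMap.hasDerivAt_lineMap
    rwa [funext (AffineMap.lineMap_apply_module y₀ y₁)] at hline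
  have hgrad := (hH _).hasGradientAt.hasFDerivAt.comp_hasDerivAt t hγ
  rwa [InnerProductSpace.toDual_apply_apply, real_inner_comm] at hgrad

theorem integral_inner_gradient_segment {H : E → ℝ} (hH : ContDiff ℝ 1 H) (y₀ y₁ : E) :
    ∫ t in (0:ℝ)..1, ⟪y₁ - y₀, ∇ H ((1 - t) • y₀ + t • y₁)⟫ = H y₁ - H y₀ := by
  have hcont : Continuous fun t : ℝ => ⟪y₁ - y₀, ∇ H ((1 - t) • y₀ + t • y₁)⟫ :=
    continuous_const.inner (hH.continuous_gradient.comp (by fun_prop))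
  rw [intervalIntegral.integral_eq_sub_of_hasDerivAt
    (fun t _ => hasDerivAt_comp_segment (hH.differentiable one_ne_zero) y₀ y₁ t)
    (hcont.intervalIntegrable 0 1)]
  simp

end InnerProductSpace

theorem stmt3_general {m k : ℕ} (H : EuclideanSpace ℝ (Fin (2 * m)) → ℝ)
    (hH : ContDiff ℝ 1 H)
    (J : EuclideanSpace ℝ (Fin (2 * m)) →ₗ[ℝ] EuclideanSpace ℝ (Fin (2 * m)))
    (hJ : ∀ v w : EuclideanSpace ℝ (Fin (2 * m)), ⟪J v, w⟫ = - ⟪v, J w⟫)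
    (y₀ y₁ : EuclideanSpace ℝ (Fin (2 * m))) (h : ℝ)
    (c b : Fin k → ℝ)
    (hmethod : y₁ = y₀ + h • ∑ i, b i • J (gradient H ((1 - c i) • y₀ + c i • y₁)))
    (hquad : ∫ t in (0:ℝ)..1, ⟪y₁ - y₀, gradient H ((1 - t) • y₀ + t • y₁)⟫
        = ∑ i, b i * ⟪y₁ - y₀, gradient H ((1 - c i) • y₀ + c i • y₁)⟫) :
    H y₁ = H y₀ := by
  have hstep : y₁ - y₀ = h • ∑ i, b i • J (∇ H ((1 - c i) • y₀ + c i • y₁)) :=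
    sub_eq_of_eq_add' hmethod
  have henergy : H y₁ - H y₀ = 0 := by
    rw [← integral_inner_gradient_segment hH, hquad, hstep]
    exact sum_mul_inner_eq_zero_of_skew hJ h b _
  exact sub_eq_zero.mp henergy

/-- Energy conservation of the `k`-stage trapezoidal method, under exactness of the
quadrature formula on the line-integral integrand. -/
theorem stmt3 {m k : ℕ} (H : EuclideanSpace ℝ (Fin (2 * m)) → ℝ)
    (hH : ContDiff ℝ 1 H)
    (J : EuclideanSpace ℝ (Fin (2 * m)) →ₗ[ℝ] EuclideanSpace ℝ (Fin (2 * m)))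
    (hJ : ∀ v w : EuclideanSpace ℝ (Fin (2 * m)), ⟪J v, w⟫ = - ⟪v, J w⟫)
    (y₀ y₁ : EuclideanSpace ℝ (Fin (2 * m))) (h : ℝ)
    (c b : Fin k → ℝ) (hc : ∀ i, c i ∈ Set.Icc (0:ℝ) 1)
    (hmethod : y₁ = y₀ + h • ∑ i, b i • J (gradient H ((1 - c i) • y₀ + c i • y₁)))
    (hquad : ∫ t in (0:ℝ)..1, ⟪y₁ - y₀, gradient H ((1 - t) • y₀ + t • y₁)⟫
        = ∑ i, b i * ⟪y₁ - y₀, gradient H ((1 - c i) • y₀ + c i • y₁)⟫) :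
    H y₁ = H y₀ :=
  stmt3_general H hH J hJ y₀ y₁ h c b hmethod hquad
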